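/- arXiv:1808.08667 — 2 statements merged into one kernel-verified Lean document; each statement's English description precedes it below -/
import Mathlib

section
/- Let W_h^0 be the space of edge-based piecewise constant functions on a conforming polygonal partition of Ω vanishing on ∂Ω. Suppose v_b ∈ W_h^0 satisfies: on every element T, the weak gradient ∇_w v_b = 0 and v_b(e_i) = s(v_b)(M_i) for every edge e_i of T (where s(v_b) is the affine extension). Then v_b ≡ 0. -/
/-!
On each element `T` the midpoint condition lets one replace `v_b` by its affine extension
`s(v_b) = a_T + g_T · x` in the edge sum defining the weak gradient; the divergence identity
turns that sum into `|T| g_T`, so `∇_w v_b = 0` forces `g_T = 0`. Hence `v_b` takes the single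
value `a_T` on all edges of `T`. Two elements sharing an edge get the same constant, elements
touching `∂Ω` get `0`, and connectivity of the partition makes every constant `0`.
-/

noncomputable def dot2 (a b : ℝ × ℝ) : ℝ := a.1 * b.1 + a.2 * b.2

@[simp]
lemma dot2_zero_left (b : ℝ × ℝ) : dot2 0 b = 0 := by
  simp [dot2]

lemma eq_zero_of_smul_eq_sum_of_sum_eq_zero {ε M : Type*} [AddCommGroup M] [Module ℝ M]
    (s : Finset ε) (v f : ε → ℝ) (w : ε → M) {a : ℝ} {x : M} (ha : a ≠ 0)
    (hvf : ∀ e ∈ s, v e = f e) (hx : a • x = ∑ e ∈ s, f e • w e)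
    (hv : ∑ e ∈ s, v e • w e = 0) : x = 0 := by
  rw [Finset.sum_congr rfl fun e he => by rw [← hvf e he], hv] at hx
  exact (smul_eq_zero.mp hx).resolve_left ha

lemma eq_zero_of_eq_const_on_cells {ι ε : Type*} (edges : ι → Finset ε) (Bdry : Finset ε)
    (hcover : ∀ e : ε, e ∈ Bdry ∨ ∃ t, e ∈ edges t)
    (v : ε → ℝ) (hv0 : ∀ e ∈ Bdry, v e = 0) (c : ι → ℝ) (hvc : ∀ t, ∀ e ∈ edges t, v e = c t)
    (hconn : ∀ c : ι → ℝ,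
        (∀ t t' : ι, (∃ e, e ∈ edges t ∧ e ∈ edges t') → c t = c t') →
        (∀ t : ι, (∃ e ∈ edges t, e ∈ Bdry) → c t = 0) → ∀ t, c t = 0) :
    ∀ e, v e = 0 := by
  have hc : ∀ t, c t = 0 := by
    apply hconn
    · rintro t t' ⟨e, he, he'⟩
      rw [← hvc t e he, hvc t' e he']
    · rintro t ⟨e, he, heB⟩
      rw [← hvc t e he, hv0 e heB]
  intro e
  rcases hcover e with heB | ⟨t, he⟩
  · exact hv0 e heB
  · rw [hvc t e he, hc t]

theorem stmt11_general {ι ε : Type*}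
    (edges : ι → Finset ε) (Bdry : Finset ε)
    (hcover : ∀ e : ε, e ∈ Bdry ∨ ∃ t, e ∈ edges t)
    (mid : ε → ℝ × ℝ) (len : ι → ε → ℝ)
    (nrm : ι → ε → ℝ × ℝ)
    (area : ι → ℝ) (harea : ∀ t, 0 < area t)
    (v : ε → ℝ) (hv0 : ∀ e ∈ Bdry, v e = 0)
    (aco : ι → ℝ) (g : ι → ℝ × ℝ)
    (hmatch : ∀ t, ∀ e ∈ edges t, v e = aco t + dot2 (g t) (mid e))
    (hdivid : ∀ t, area t • g t
        = ∑ e ∈ edges t, (aco t + dot2 (g t) (mid e)) • (len t e • nrm t e))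
    (hwg : ∀ t, ∑ e ∈ edges t, v e • (len t e • nrm t e) = (0 : ℝ × ℝ))
    (hconn : ∀ c : ι → ℝ,
        (∀ t t' : ι, (∃ e, e ∈ edges t ∧ e ∈ edges t') → c t = c t') →
        (∀ t : ι, (∃ e ∈ edges t, e ∈ Bdry) → c t = 0) → ∀ t, c t = 0) :
    ∀ e, v e = 0 := by
  have hg : ∀ t, g t = 0 := fun t =>
    eq_zero_of_smul_eq_sum_of_sum_eq_zero _ v _ _ (harea t).ne' (hmatch t) (hdivid t) (hwg t)
  have hconst : ∀ t, ∀ e ∈ edges t, v e = aco t := fun t e he => by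
    simp [hmatch t e he, hg t]
  exact eq_zero_of_eq_const_on_cells edges Bdry hcover v hv0 aco hconst hconn

/-- If `v_b ∈ W_h^0` (single-valued on edges, zero on boundary edges) has
vanishing weak gradient on every element and matches its affine extension
`s(v_b) = aco t + g t · x` at all edge midpoints, then (using the
divergence/midpoint identity and the connectivity of the partition)
`v_b ≡ 0`. -/
theorem stmt11 {ι ε : Type*} [Fintype ι] [Fintype ε]
    (edges : ι → Finset ε) (Bdry : Finset ε)
    (hcover : ∀ e : ε, e ∈ Bdry ∨ ∃ t, e ∈ edges t)
    (mid : ε → ℝ × ℝ) (len : ι → ε → ℝ) (hlen : ∀ t, ∀ e ∈ edges t, 0 < len t e)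
    (nrm : ι → ε → ℝ × ℝ)
    (area : ι → ℝ) (harea : ∀ t, 0 < area t)
    (v : ε → ℝ) (hv0 : ∀ e ∈ Bdry, v e = 0)
    (aco : ι → ℝ) (g : ι → ℝ × ℝ)
    (hmatch : ∀ t, ∀ e ∈ edges t, v e = aco t + dot2 (g t) (mid e))
    (hdivid : ∀ t, area t • g t
        = ∑ e ∈ edges t, (aco t + dot2 (g t) (mid e)) • (len t e • nrm t e))
    (hwg : ∀ t, ∑ e ∈ edges t, v e • (len t e • nrm t e) = (0 : ℝ × ℝ))
    (hconn : ∀ c : ι → ℝ,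
        (∀ t t' : ι, (∃ e, e ∈ edges t ∧ e ∈ edges t') → c t = c t') →
        (∀ t : ι, (∃ e ∈ edges t, e ∈ Bdry) → c t = 0) → ∀ t, c t = 0) :
    ∀ e, v e = 0 :=
  stmt11_general edges Bdry hcover mid len nrm area harea v hv0 aco g hmatch hdivid hwg hconn
end

section
/- Under the definitions of the SWG element matrices: for boundary data vectors X_u = (u_{b,1},...,u_{b,N})ᵀ and X_v, with D = (MᵀEM)^{-1}MᵀE and ζ_i(x,y) = d_{1,i} + d_{2,i}(x − x_T) + d_{3,i}(y − y_T), the convection bilinear form satisfies b_T(u_b, v_b) = (β·∇_w u_b, s(v_b))_T = X_vᵀ R X_u where R = {r_{ij}} with r_{ij} = (|e_j|/|T|) ∫_T β·n_j ζ_i dT. -/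
open Matrix MeasureTheory

theorem dot2_smul_right (a b : ℝ × ℝ) (c : ℝ) : dot2 a (c • b) = c * dot2 a b := by
  simp only [dot2, Prod.smul_fst, Prod.smul_snd, smul_eq_mul]
  ring

theorem dot2_sum_right {ι : Type*} (s : Finset ι) (a : ℝ × ℝ) (b : ι → ℝ × ℝ) :
    dot2 a (∑ j ∈ s, b j) = ∑ j ∈ s, dot2 a (b j) := by
  simp only [dot2, Prod.fst_sum, Prod.snd_sum, Finset.mul_sum, Finset.sum_add_distrib]

theorem integral_sum_mul_sum {α ι κ : Type*} [MeasurableSpace α] {μ : Measure α}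
    (s : Finset ι) (t : Finset κ) (f : κ → α → ℝ) (g : ι → α → ℝ) (a : κ → ℝ) (b : ι → ℝ)
    (hfg : ∀ i j, Integrable (fun x => f j x * g i x) μ) :
    ∫ x, (∑ j ∈ t, a j * f j x) * (∑ i ∈ s, b i * g i x) ∂μ
      = ∑ i ∈ s, ∑ j ∈ t, b i * (a j * ∫ x, f j x * g i x ∂μ) := by
  have hexpand : ∀ x, (∑ j ∈ t, a j * f j x) * (∑ i ∈ s, b i * g i x)
      = ∑ i ∈ s, ∑ j ∈ t, b i * (a j * (f j x * g i x)) := fun x => by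
    rw [Finset.sum_mul_sum, Finset.sum_comm]
    exact Finset.sum_congr rfl fun i _ => Finset.sum_congr rfl fun j _ => by ring
  have hint : ∀ i j, Integrable (fun x => b i * (a j * (f j x * g i x))) μ :=
    fun i j => ((hfg i j).const_mul _).const_mul _
  simp_rw [hexpand]
  rw [integral_finsetSum _ fun i _ => integrable_finsetSum _ fun j _ => hint i j]
  refine Finset.sum_congr rfl fun i _ => ?_
  rw [integral_finsetSum _ fun j _ => hint i j]
  simp_rw [integral_const_mul]

theorem stmt15_general (N : ℕ) (T : Set (ℝ × ℝ)) (areaT : ℝ)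
    (len : Fin N → ℝ)
    (n : Fin N → ℝ × ℝ) (β : ℝ × ℝ → ℝ × ℝ)
    (ζ : Fin N → ℝ × ℝ → ℝ)
    (u v : Fin N → ℝ)
    (wgu : ℝ × ℝ) (hwgu : wgu = areaT⁻¹ • ∑ j, u j • (len j • n j))
    (sv : ℝ × ℝ → ℝ) (hsv : ∀ x, sv x = ∑ i, v i * ζ i x)
    (hint : ∀ i j, IntegrableOn (fun x => dot2 (β x) (n j) * ζ i x) T)
    (R : Matrix (Fin N) (Fin N) ℝ)
    (hR : ∀ i j, R i j = (len j / areaT) * ∫ x in T, dot2 (β x) (n j) * ζ i x) :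
    ∫ x in T, dot2 (β x) wgu * sv x = ∑ i, ∑ j, v i * R i j * u j := by
  have hgrad : ∀ x, dot2 (β x) wgu = ∑ j, (len j / areaT * u j) * dot2 (β x) (n j) := by
    intro x
    simp only [hwgu, dot2_smul_right, dot2_sum_right, Finset.mul_sum]
    exact Finset.sum_congr rfl fun j _ => by ring
  simp_rw [hgrad, hsv]
  rw [integral_sum_mul_sum _ _ _ _ _ _ hint]
  simp_rw [hR]
  exact Finset.sum_congr rfl fun i _ => Finset.sum_congr rfl fun j _ => by ring

/-- The convection element matrix: with `D = (MᵀEM)⁻¹MᵀE`,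
`ζ_i(x,y) = d_{1,i} + d_{2,i}(x − x_T) + d_{3,i}(y − y_T)`,
`∇_w u_b = (1/|T|) Σ_j u_{b,j}|e_j| n_j`, and `s(v_b) = Σ_i v_i ζ_i`, the
convection bilinear form satisfies
`b_T(u_b,v_b) = (β·∇_w u_b, s(v_b))_T = X_vᵀ R X_u` where
`r_{ij} = (|e_j|/|T|) ∫_T β·n_j ζ_i dT`. -/
theorem stmt15 (N : ℕ) (T : Set (ℝ × ℝ)) (areaT : ℝ) (hT : 0 < areaT)
    (len : Fin N → ℝ) (hlen : ∀ i, 0 < len i)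
    (n : Fin N → ℝ × ℝ) (β : ℝ × ℝ → ℝ × ℝ) (xT yT : ℝ)
    (Mm : Matrix (Fin N) (Fin 3) ℝ) (E : Matrix (Fin N) (Fin N) ℝ)
    (D : Matrix (Fin 3) (Fin N) ℝ) (hD : D = (Mmᵀ * E * Mm)⁻¹ * Mmᵀ * E)
    (ζ : Fin N → ℝ × ℝ → ℝ)
    (hζ : ∀ i (x : ℝ × ℝ), ζ i x = D 0 i + D 1 i * (x.1 - xT) + D 2 i * (x.2 - yT))
    (u v : Fin N → ℝ)
    (wgu : ℝ × ℝ) (hwgu : wgu = areaT⁻¹ • ∑ j, u j • (len j • n j))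
    (sv : ℝ × ℝ → ℝ) (hsv : ∀ x, sv x = ∑ i, v i * ζ i x)
    (hint : ∀ i j, IntegrableOn (fun x => dot2 (β x) (n j) * ζ i x) T)
    (R : Matrix (Fin N) (Fin N) ℝ)
    (hR : ∀ i j, R i j = (len j / areaT) * ∫ x in T, dot2 (β x) (n j) * ζ i x) :
    ∫ x in T, dot2 (β x) wgu * sv x = ∑ i, ∑ j, v i * R i j * u j :=
  stmt15_general N T areaT len n β ζ u v wgu hwgu sv hsv hint R hR
end
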